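/- Correctness of the Σ₂-saturation: let α: (A^+, A^∞) → (S_+, S_∞) be an alphabet-compatible morphism into a finite ω-semigroup. If (r₁,r₂) ∈ C_{2,2}[α_+], (s₁,s₂) ∈ C_{2,2}[α_+], t₂ ∈ α(A^∞) and alph(s₁) = alph(t₂), then (r₁(s₁)^∞, r₂(s₂)^ω t₂) ∈ C_{2,2}[α_∞]; that is, for every k ≥ 1 there exist ω-words w₁ ≲_{2,k} w₂ with α(w₁) = r₁(s₁)^∞ and α(w₂) = r₂(s₂)^ω t₂. -/

import Mathlib

/-!
A `Σ₂` sentence of quantifier rank at most `k` is equivalent to one of the form `∃^a ∀^b ψ` with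
`ψ` quantifier-free and `a + b ≤ k`. Hence `≲_{2,k}` follows from a win of Duplicator in the
two-round Ehrenfeucht–Fraïssé game `Sigma2Game` for all `a + b ≤ k`; conversely, for finite
words `≲_{2,k}` yields such a win, since the types of the finitely many `b`-tuples form a
disjunction.

Take `x₁ ≲_{2,k} x₂` and `y₁ ≲_{2,k} y₂` realising `(r₁, r₂)` and `(s₁, s₂)`, an ω-word `t`
realising `t₂`, and `ℓ ≥ k` a multiple of the idempotent exponent. Then
`x₁ y₁^∞ ≲ x₁ y₁^ℓ t ≲ x₂ y₂^ℓ t`. The second step holds because the game is compatible with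
concatenation. For the first, `y₁^ℓ t` embeds into `y₁^∞` (the letters of `t` occur in `y₁`) so
that the at most `k` copies of `y₁` containing Spoiler's existential moves are images of copies
among the first `ℓ`, and `Σ₂` sentences pass to substructures containing their witnesses.
-/

namespace QAH

/-- Quantifier-free first-order formulas over letter predicates and `<`,
with variables as de Bruijn-style indices into a valuation. -/
inductive QF (A : Type) : Type
  | tru : QF A
  | letter : A → ℕ → QF A
  | lt : ℕ → ℕ → QF A
  | not : QF A → QF A
  | or : QF A → QF A → QF A

/-- Prenex first-order formulas: a quantifier prefix over a quantifier-free matrix. -/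
inductive Prenex (A : Type) : Type
  | qf : QF A → Prenex A
  | ex : Prenex A → Prenex A
  | all : Prenex A → Prenex A

variable {A : Type}

/-- Quantifier rank (for a prenex formula: the number of quantifiers). -/
def Prenex.rank : Prenex A → ℕ
  | .qf _ => 0
  | .ex φ => φ.rank + 1
  | .all φ => φ.rank + 1

def QF.ClosedUnder (n : ℕ) : QF A → Prop
  | .tru => True
  | .letter _ x => x < n
  | .lt x y => x < n ∧ y < n
  | .not φ => φ.ClosedUnder n
  | .or φ ψ => φ.ClosedUnder n ∧ ψ.ClosedUnder n

def Prenex.ClosedUnder : ℕ → Prenex A → Prop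
  | n, .qf φ => φ.ClosedUnder n
  | n, .ex φ => φ.ClosedUnder (n+1)
  | n, .all φ => φ.ClosedUnder (n+1)

/-- A sentence: no free variables. -/
def Prenex.Closed (φ : Prenex A) : Prop := φ.ClosedUnder 0

/-- `(φ.levels).1` is the least `i` such that `φ` is a `Σᵢ` formula (at most `i`
alternating quantifier blocks, starting with `∃`, or fewer blocks), and
`(φ.levels).2` the least `i` such that `φ` is a `Πᵢ` formula. -/
def Prenex.levels : Prenex A → ℕ × ℕ
  | .qf _ => (0, 0)
  | .ex φ => (max (φ.levels).1 1, max (φ.levels).1 1 + 1)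
  | .all φ => (max (φ.levels).2 1 + 1, max (φ.levels).2 1)

/-- `φ` is a `Σᵢ` formula. -/
def Prenex.IsSigma (i : ℕ) (φ : Prenex A) : Prop := (φ.levels).1 ≤ i

def consVal {D : Type} (d : D) (val : ℕ → D) : ℕ → D
  | 0 => d
  | n+1 => val n

def QF.Sat {D : Type} [LT D] (w : D → A) (val : ℕ → D) : QF A → Prop
  | .tru => True
  | .letter a x => w (val x) = a
  | .lt x y => val x < val y
  | .not φ => ¬ QF.Sat w val φ
  | .or φ ψ => QF.Sat w val φ ∨ QF.Sat w val ψ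

def Prenex.Sat {D : Type} [LT D] (w : D → A) : (ℕ → D) → Prenex A → Prop
  | val, .qf φ => φ.Sat w val
  | val, .ex φ => ∃ d : D, Prenex.Sat w (consVal d val) φ
  | val, .all φ => ∀ d : D, Prenex.Sat w (consVal d val) φ

/-- Satisfaction of a sentence by a finite word (positions `Fin u.length`). -/
def SatFin (u : List A) (φ : Prenex A) : Prop :=
  ∀ val : ℕ → Fin u.length, φ.Sat u.get val

/-- Satisfaction of a sentence by an ω-word (positions `ℕ`). -/
def SatInf (w : ℕ → A) (φ : Prenex A) : Prop :=
  ∀ val : ℕ → ℕ, φ.Sat w val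

/-- `u ≲_{i,k} v` on finite words: every `Σᵢ` sentence of quantifier rank at most `k`
satisfied by `u` is satisfied by `v`. -/
def leFin (i k : ℕ) (u v : List A) : Prop :=
  ∀ φ : Prenex A, φ.Closed → φ.IsSigma i → φ.rank ≤ k → SatFin u φ → SatFin v φ

/-- `u ≲_{i,k} v` on ω-words. -/
def leInf (i k : ℕ) (u v : ℕ → A) : Prop :=
  ∀ φ : Prenex A, φ.Closed → φ.IsSigma i → φ.rank ≤ k → SatInf u φ → SatInf v φ

/-- `u ≡_{i,k} v` : mutual `≲_{i,k}`. -/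
def equivFin (i k : ℕ) (u v : List A) : Prop := leFin i k u v ∧ leFin i k v u

def equivInf (i k : ℕ) (u v : ℕ → A) : Prop := leInf i k u v ∧ leInf i k v u

/-- Concatenation of a finite word to the left of an ω-word. -/
def catInf (u : List A) (v : ℕ → A) : ℕ → A :=
  fun n => if h : n < u.length then u.get ⟨n, h⟩ else v (n - u.length)

/-- The ω-word `u^∞ = uuu⋯`. -/
def wpow (u : List A) (hu : u ≠ []) : ℕ → A :=
  fun n => u.get ⟨n % u.length, Nat.mod_lt n (List.length_pos_of_ne_nil hu)⟩

/-- The finite word `u^ℓ`. -/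
def fpow (u : List A) (ℓ : ℕ) : List A := (List.replicate ℓ u).flatten

/-- The alphabet (set of letters) of a finite word. -/
def alphFin (u : List A) : Set A := {a | a ∈ u}

/-- The alphabet of an ω-word. -/
def alphInf (w : ℕ → A) : Set A := {a | ∃ n, w n = a}


/-! ### Definability and separation -/

/-- `K` is defined (within `A^+`) by a closed `Σᵢ` sentence. -/
def SigmaDefFin (i : ℕ) (K : Set (List A)) : Prop :=
  ∃ φ : Prenex A, φ.Closed ∧ φ.IsSigma i ∧ K = {u | u ≠ [] ∧ SatFin u φ}

/-- `K` is defined by a closed `Σᵢ` sentence (ω-words). -/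
def SigmaDefInf (i : ℕ) (K : Set (ℕ → A)) : Prop :=
  ∃ φ : Prenex A, φ.Closed ∧ φ.IsSigma i ∧ K = {w | SatInf w φ}

/-- `K` separates `L₁` from `L₂`. -/
def Separates {X : Type} (K L₁ L₂ : Set X) : Prop := L₁ ⊆ K ∧ K ∩ L₂ = ∅

/-- Boolean combinations (relative to the universe `U`) of sets satisfying `G`. -/
inductive BoolComb {X : Type} (U : Set X) (G : Set X → Prop) : Set X → Prop
  | base (K : Set X) (h : G K) : BoolComb U G K
  | compl (K : Set X) (h : BoolComb U G K) : BoolComb U G (U \ K)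
  | union (K K' : Set X) (h : BoolComb U G K) (h' : BoolComb U G K') : BoolComb U G (K ∪ K')

/-- `K ⊆ A^+` is `BΣᵢ`-definable: a Boolean combination of `Σᵢ`-definable languages. -/
def BSigmaDefFin (i : ℕ) (K : Set (List A)) : Prop :=
  BoolComb {u : List A | u ≠ []} (SigmaDefFin i) K

def BSigmaDefInf (i : ℕ) (K : Set (ℕ → A)) : Prop :=
  BoolComb Set.univ (SigmaDefInf i) K

/-! ### Semigroups and ω-semigroups -/

/-- `mpow mul s n` is `s^(n+1)`: the `(n+1)`-fold product of `s`. -/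
def mpow {S : Type} (mul : S → S → S) (s : S) : ℕ → S
  | 0 => s
  | n+1 => mul (mpow mul s n) s

/-- `segProd mul f a n` is the product `f a * f (a+1) * ⋯ * f (a+n)`. -/
def segProd {S : Type} (mul : S → S → S) (f : ℕ → S) (a : ℕ) : ℕ → S
  | 0 => f a
  | n+1 => mul (segProd mul f a n) (f (a + n + 1))

/-- An ω-semigroup `(S₊, S_∞)`: a semigroup `S₊`, a mixed product and an infinite
product, satisfying all forms of associativity. -/
structure OmegaSG (Sp Si : Type) where
  mul : Sp → Sp → Sp
  act : Sp → Si → Si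
  iprod : (ℕ → Sp) → Si
  mul_assoc : ∀ a b c, mul (mul a b) c = mul a (mul b c)
  act_assoc : ∀ a b x, act (mul a b) x = act a (act b x)
  act_iprod : ∀ f : ℕ → Sp, act (f 0) (iprod fun n => f (n+1)) = iprod f
  iprod_group : ∀ (f : ℕ → Sp) (c : ℕ → ℕ), StrictMono c → c 0 = 0 →
    iprod (fun n => segProd mul f (c n) (c (n+1) - c n - 1)) = iprod f

/-- `s^∞`: the infinite product `sss⋯`. -/
def OmegaSG.ipow {Sp Si : Type} (M : OmegaSG Sp Si) (s : Sp) : Si := M.iprod fun _ => s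

/-- The set `C_{2,2}[α₊]` of `Σ₂`-chains of length 2 for `α₊ : A⁺ → S₊`. -/
def C22Fin {Sp : Type} (αp : List A → Sp) : Set (Sp × Sp) :=
  {p | ∀ k, 1 ≤ k → ∃ x y : List A, x ≠ [] ∧ y ≠ [] ∧
      αp x = p.1 ∧ αp y = p.2 ∧ leFin 2 k x y}

/-- The set `C_{2,2}[α_∞]` of `Σ₂`-chains of length 2 for `α_∞ : A^∞ → S_∞`. -/
def C22Inf {Si : Type} (αi : (ℕ → A) → Si) : Set (Si × Si) :=
  {p | ∀ k, 1 ≤ k → ∃ w₁ w₂ : ℕ → A,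
      αi w₁ = p.1 ∧ αi w₂ = p.2 ∧ leInf 2 k w₁ w₂}

/-- The alphabet of `s ∈ S₊` (well defined when `α` is alphabet compatible). -/
def alphS {Sp : Type} (αp : List A → Sp) (s : Sp) : Set A :=
  {a | ∃ u : List A, u ≠ [] ∧ αp u = s ∧ a ∈ u}

/-- The alphabet of `t ∈ S_∞`. -/
def alphSi {Si : Type} (αi : (ℕ → A) → Si) (t : Si) : Set A :=
  {a | ∃ w : ℕ → A, αi w = t ∧ ∃ n, w n = a}

/-- Multiplication on `S₊¹ = S₊ ∪ {1}` by an element of `S₊` (`none` is the neutral element). -/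
def mul1 {Sp Si : Type} (M : OmegaSG Sp Si) : Option Sp → Sp → Sp
  | none, s => s
  | some t, s => M.mul t s

/-- The `B`-labeled edge relation of the graph `G[α]` associated to `α`:
`(s₊, s_∞) →_B (t₊, t_∞)` iff there are `(p₁,p₂), (q₁,q₂) ∈ C₂[α₊]` and `q ∈ α(A⁺)`
with `alph p₁ = alph q₁ = alph q = B`, `s₊ p₁ (q₁)^∞ = s_∞` and `s₊ p₂ (q₂)^ω q = t₊`.
Here `e` is such that `x ↦ mpow M.mul x e = x^(e+1) = x^ω` is the idempotent power. -/
def Edge {Sp Si : Type} (M : OmegaSG Sp Si) (αp : List A → Sp) (e : ℕ) (B : Set A)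
    (n m : Option Sp × Si) : Prop :=
  ∃ p₁ p₂ q₁ q₂ qq : Sp,
    (p₁, p₂) ∈ C22Fin αp ∧ (q₁, q₂) ∈ C22Fin αp ∧ (∃ u : List A, u ≠ [] ∧ αp u = qq) ∧
    alphS αp p₁ = B ∧ alphS αp q₁ = B ∧ alphS αp qq = B ∧
    M.act (mul1 M n.1 p₁) (M.ipow q₁) = n.2 ∧
    m.1 = some (M.mul (mul1 M n.1 p₂) (M.mul (mpow M.mul q₂ e) qq))

namespace Prenex

def exIter : ℕ → Prenex A → Prenex A
  | 0, φ => φ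
  | n + 1, φ => .ex (exIter n φ)

def allIter : ℕ → Prenex A → Prenex A
  | 0, φ => φ
  | n + 1, φ => .all (allIter n φ)

lemma rank_exIter (n : ℕ) (φ : Prenex A) : (exIter n φ).rank = φ.rank + n := by
  induction n with
  | zero => rfl
  | succ n ih => simp only [exIter, rank, ih]; rfl

lemma rank_allIter (n : ℕ) (φ : Prenex A) : (allIter n φ).rank = φ.rank + n := by
  induction n with
  | zero => rfl
  | succ n ih => simp only [allIter, rank, ih]; rfl

lemma closedUnder_exIter (n m : ℕ) (φ : Prenex A) :
    (exIter n φ).ClosedUnder m ↔ φ.ClosedUnder (m + n) := by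
  induction n generalizing m with
  | zero => rfl
  | succ n ih => exact (ih (m + 1)).trans (by rw [Nat.add_right_comm]; rfl)

lemma closedUnder_allIter (n m : ℕ) (φ : Prenex A) :
    (allIter n φ).ClosedUnder m ↔ φ.ClosedUnder (m + n) := by
  induction n generalizing m with
  | zero => rfl
  | succ n ih => exact (ih (m + 1)).trans (by rw [Nat.add_right_comm]; rfl)

lemma levels_allIter_qf (b : ℕ) (ψ : QF A) :
    (allIter b (qf ψ)).levels.1 ≤ 2 ∧ (allIter b (qf ψ)).levels.2 ≤ 1 := by
  induction b with
  | zero => simp [allIter, levels]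
  | succ b ih => simp only [allIter, levels]; omega

lemma isSigma_two_exIter_allIter (a b : ℕ) (ψ : QF A) :
    (exIter a (allIter b (qf ψ))).IsSigma 2 := by
  induction a with
  | zero => exact (levels_allIter_qf b ψ).1
  | succ a ih => simp only [IsSigma, exIter, levels] at ih ⊢; omega

lemma exists_eq_allIter_of_levels_snd_le_one {φ : Prenex A} (h : φ.levels.2 ≤ 1) :
    ∃ b ψ, φ = allIter b (qf ψ) := by
  induction φ with
  | qf ψ => exact ⟨0, ψ, rfl⟩
  | ex χ _ => simp [levels] at h
  | all χ ih =>
      simp only [levels] at h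
      obtain ⟨b, ψ, rfl⟩ := ih (by omega)
      exact ⟨b + 1, ψ, rfl⟩

lemma exists_eq_exIter_allIter_of_isSigma_two {φ : Prenex A} (h : φ.IsSigma 2) :
    ∃ a b ψ, φ = exIter a (allIter b (qf ψ)) := by
  induction φ with
  | qf ψ => exact ⟨0, 0, ψ, rfl⟩
  | ex χ ih =>
      simp only [IsSigma, levels] at h ih
      obtain ⟨a, b, ψ, rfl⟩ := ih (by omega)
      exact ⟨a + 1, b, ψ, rfl⟩
  | all χ _ =>
      simp only [IsSigma, levels] at h
      obtain ⟨b, ψ, rfl⟩ := exists_eq_allIter_of_levels_snd_le_one (φ := χ) (by omega)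
      exact ⟨0, b + 1, ψ, rfl⟩

end Prenex

section Valuations

variable {D : Type}

def prependVal {n : ℕ} (t : Fin n → D) (val : ℕ → D) : ℕ → D :=
  fun i => if h : i < n then t ⟨i, h⟩ else val (i - n)

lemma prependVal_zero (t : Fin 0 → D) (val : ℕ → D) : prependVal t val = val := by
  funext i
  simp [prependVal]

lemma prependVal_consVal {n : ℕ} (t : Fin n → D) (d : D) (val : ℕ → D) :
    prependVal t (consVal d val) = prependVal (Fin.snoc t d : Fin (n + 1) → D) val := by
  funext i
  rcases lt_trichotomy i n with h | rfl | h
  · simp [prependVal, Fin.snoc, h, Nat.lt_succ_of_lt h]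
  · simp [prependVal, Fin.snoc, consVal]
  · obtain ⟨j, rfl⟩ := Nat.exists_eq_add_of_lt h
    simp [prependVal, consVal, show ¬ n + j + 1 < n by omega,
      show n + j + 1 - n = j + 1 by omega]

lemma prependVal_prependVal {a b : ℕ} (e : Fin b → D) (d : Fin a → D) (val : ℕ → D)
    (i : Fin (b + a)) : prependVal e (prependVal d val) i = Fin.append e d i := by
  refine Fin.addCases (fun j => ?_) (fun j => ?_) i <;> simp [prependVal]

variable [LT D] (w : D → A)

lemma sat_exIter (n : ℕ) (φ : Prenex A) (val : ℕ → D) :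
    (Prenex.exIter n φ).Sat w val ↔ ∃ t : Fin n → D, φ.Sat w (prependVal t val) := by
  induction n generalizing val with
  | zero => simp [Prenex.exIter, prependVal_zero]
  | succ n ih =>
      simp only [Prenex.exIter, Prenex.Sat, ih, prependVal_consVal]
      exact ⟨fun ⟨d, t, h⟩ => ⟨_, h⟩,
        fun ⟨t, h⟩ => ⟨t (Fin.last n), Fin.init t, by rwa [Fin.snoc_init_self]⟩⟩

lemma sat_allIter (n : ℕ) (φ : Prenex A) (val : ℕ → D) :
    (Prenex.allIter n φ).Sat w val ↔ ∀ t : Fin n → D, φ.Sat w (prependVal t val) := by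
  induction n generalizing val with
  | zero => simp [Prenex.allIter, prependVal_zero]
  | succ n ih =>
      simp only [Prenex.allIter, Prenex.Sat, ih, prependVal_consVal]
      exact ⟨fun h t => by simpa only [Fin.snoc_init_self] using h (t (Fin.last n)) (Fin.init t),
        fun h _ _ => h _⟩

end Valuations

def SameType {D D' ι : Type} [LT D] [LT D'] (w : D → A) (w' : D' → A) (p : ι → D) (q : ι → D') :
    Prop :=
  (∀ i, w (p i) = w' (q i)) ∧ ∀ i j, p i < p j ↔ q i < q j

section SameType

variable {D D' D'' ι : Type}

lemma SameType.trans [LT D] [LT D'] [LT D''] {w : D → A} {w' : D' → A} {w'' : D'' → A}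
    {p : ι → D} {q : ι → D'} {r : ι → D''} (h : SameType w w' p q) (h' : SameType w' w'' q r) :
    SameType w w'' p r :=
  ⟨fun i => (h.1 i).trans (h'.1 i), fun i j => (h.2 i j).trans (h'.2 i j)⟩

lemma sameType_comp_of_strictMono [Preorder D] [LinearOrder D'] {w : D → A} {w' : D' → A}
    {g : D' → D} (hg : StrictMono g) (hw : ∀ x, w (g x) = w' x) (q : ι → D') :
    SameType w w' (g ∘ q) q :=
  ⟨fun i => hw (q i), fun _ _ => hg.lt_iff_lt⟩

lemma QF.sat_iff_of_sameType [LT D] [LT D'] {w : D → A} {w' : D' → A} {n : ℕ} {ψ : QF A}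
    (hψ : ψ.ClosedUnder n) {val : ℕ → D} {val' : ℕ → D'}
    (h : SameType w w' (fun i : Fin n => val i) (fun i : Fin n => val' i)) :
    ψ.Sat w val ↔ ψ.Sat w' val' := by
  induction ψ with
  | tru => exact Iff.rfl
  | letter a x => exact Eq.congr_left (h.1 ⟨x, hψ⟩)
  | lt x y => exact h.2 ⟨x, hψ.1⟩ ⟨y, hψ.2⟩
  | not φ ih => exact not_congr (ih hψ)
  | or φ χ ih₁ ih₂ => exact or_congr (ih₁ hψ.1) (ih₂ hψ.2)

end SameType

namespace QF

def and (φ ψ : QF A) : QF A := .not (.or (.not φ) (.not ψ))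

def conj (l : List (QF A)) : QF A := l.foldr and .tru

def disj (l : List (QF A)) : QF A := l.foldr or (.not .tru)

def ltIff (c : Prop) [Decidable c] (x y : ℕ) : QF A := if c then .lt x y else .not (.lt x y)

section

variable {D : Type} [LT D] (w : D → A) (val : ℕ → D)

lemma sat_conj (l : List (QF A)) : (conj l).Sat w val ↔ ∀ φ ∈ l, φ.Sat w val := by
  induction l with
  | nil => simp [conj, Sat]
  | cons φ l ih => simp [conj, and, Sat, ← ih]

lemma sat_disj (l : List (QF A)) : (disj l).Sat w val ↔ ∃ φ ∈ l, φ.Sat w val := by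
  induction l with
  | nil => simp [disj, Sat]
  | cons φ l ih => simp [disj, Sat, ← ih]

lemma sat_ltIff (c : Prop) [Decidable c] (x y : ℕ) :
    (ltIff c x y : QF A).Sat w val ↔ (c ↔ val x < val y) := by
  unfold ltIff; split_ifs with hc <;> simp [Sat, hc]

end

lemma closedUnder_conj {n : ℕ} {l : List (QF A)} (h : ∀ φ ∈ l, φ.ClosedUnder n) :
    (conj l).ClosedUnder n := by
  induction l with
  | nil => trivial
  | cons φ l ih => exact ⟨h φ (by simp), ih fun ψ hψ => h ψ (by simp [hψ])⟩

lemma closedUnder_disj {n : ℕ} {l : List (QF A)} (h : ∀ φ ∈ l, φ.ClosedUnder n) :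
    (disj l).ClosedUnder n := by
  induction l with
  | nil => trivial
  | cons φ l ih => exact ⟨h φ (by simp), ih fun ψ hψ => h ψ (by simp [hψ])⟩

def type {D : Type} [LinearOrder D] (w : D → A) {n : ℕ} (p : Fin n → D) : QF A :=
  conj <| (List.finRange n).map fun i =>
    and (.letter (w (p i)) i) (conj <| (List.finRange n).map fun j => ltIff (p i < p j) i j)

lemma closedUnder_type {D : Type} [LinearOrder D] (w : D → A) {n : ℕ} (p : Fin n → D) :
    (type w p).ClosedUnder n := by
  refine closedUnder_conj ?_
  simp only [List.mem_map, List.mem_finRange, true_and, forall_exists_index,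
    forall_apply_eq_imp_iff]
  refine fun i => ⟨i.isLt, closedUnder_conj ?_⟩
  simp only [List.mem_map, List.mem_finRange, true_and, forall_exists_index,
    forall_apply_eq_imp_iff]
  intro j
  unfold ltIff; split_ifs <;> exact ⟨i.isLt, j.isLt⟩

lemma sat_type_iff {D D' : Type} [LinearOrder D] [LT D'] (w : D → A) (w' : D' → A) {n : ℕ}
    (p : Fin n → D) (val : ℕ → D') :
    (type w p).Sat w' val ↔ SameType w w' p (fun i : Fin n => val i) := by
  simp [type, SameType, sat_conj, and, Sat, sat_ltIff, forall_and, eq_comm]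

end QF

/-- Duplicator wins the Ehrenfeucht–Fraïssé game for `∃^a ∀^b` sentences from `w` to `w'`. -/
def Sigma2Game {D D' : Type} [LT D] [LT D'] (w : D → A) (w' : D' → A) (a b : ℕ) : Prop :=
  ∀ d : Fin a → D, ∃ f : Fin a → D', ∀ e' : Fin b → D', ∃ e : Fin b → D,
    SameType w w' (Fin.append e d) (Fin.append e' f)

namespace Sigma2Game

variable {D D' D'' : Type} {a b : ℕ}

lemma refl [LT D] (w : D → A) : Sigma2Game w w a b :=
  fun d => ⟨d, fun e' => ⟨e', fun _ => rfl, fun _ _ => Iff.rfl⟩⟩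

lemma trans [LT D] [LT D'] [LT D''] {w : D → A} {w' : D' → A} {w'' : D'' → A}
    (h : Sigma2Game w w' a b) (h' : Sigma2Game w' w'' a b) : Sigma2Game w w'' a b := by
  intro d
  obtain ⟨f, hf⟩ := h d
  obtain ⟨f', hf'⟩ := h' f
  refine ⟨f', fun e'' => ?_⟩
  obtain ⟨e', he'⟩ := hf' e''
  obtain ⟨e, he⟩ := hf e'
  exact ⟨e, he.trans he'⟩

/-- Σ₂ sentences are preserved by passing to substructures containing the existential
witnesses. -/
lemma of_embeddings [Preorder D] [LinearOrder D'] {w : D → A} {w' : D' → A}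
    (h : ∀ d : Fin a → D, ∃ g : D' → D, StrictMono g ∧ (∀ x, w (g x) = w' x) ∧
      ∀ i, d i ∈ Set.range g) :
    Sigma2Game w w' a b := by
  intro d
  obtain ⟨g, hg, hw, hd⟩ := h d
  choose f hf using hd
  refine ⟨f, fun e' => ⟨g ∘ e', ?_⟩⟩
  have hd : d = g ∘ f := funext fun i => (hf i).symm
  have happ : Fin.append (g ∘ e') (g ∘ f) = g ∘ Fin.append e' f :=
    funext fun i => Fin.addCases (fun _ => by simp) (fun _ => by simp) i
  rw [hd, happ]
  exact sameType_comp_of_strictMono hg hw _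

end Sigma2Game

lemma sat_of_sigma2Game {D D' : Type} [LT D] [LT D'] [Nonempty D] {w : D → A} {w' : D' → A}
    {k : ℕ} (h : ∀ a b, a + b ≤ k → Sigma2Game w w' a b) {φ : Prenex A} (hc : φ.Closed)
    (hs : φ.IsSigma 2) (hk : φ.rank ≤ k) (hφ : ∀ val, φ.Sat w val) (val' : ℕ → D') :
    φ.Sat w' val' := by
  obtain ⟨a, b, ψ, rfl⟩ := Prenex.exists_eq_exIter_allIter_of_isSigma_two hs
  simp only [Prenex.rank_exIter, Prenex.rank_allIter, Prenex.rank] at hk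
  have hψ : ψ.ClosedUnder (b + a) := by
    simpa [Prenex.Closed, Prenex.closedUnder_exIter, Prenex.closedUnder_allIter,
      Prenex.ClosedUnder, Nat.add_comm] using hc
  obtain ⟨d, hd⟩ := (sat_exIter w a _ _).1 (hφ fun _ => Classical.arbitrary D)
  obtain ⟨f, hf⟩ := h a b (by omega) d
  refine (sat_exIter w' a _ _).2 ⟨f, (sat_allIter w' b _ _).2 fun e' => ?_⟩
  obtain ⟨e, he⟩ := hf e'
  refine (QF.sat_iff_of_sameType hψ ?_).1 ((sat_allIter w b _ _).1 hd e)
  simpa only [prependVal_prependVal] using he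

lemma sigma2Game_of_leFin {u v : List A} {k a b : ℕ} (h : leFin 2 k u v) (hab : a + b ≤ k)
    (hv : v ≠ []) : Sigma2Game u.get v.get a b := by
  classical
  intro d
  -- `Φ` says: some `a`-tuple, together with any `b`-tuple, has the type of `d` together with
  -- some `b`-tuple of `u`.
  let ψ : QF A := QF.disj <| (Finset.univ : Finset (Fin b → Fin u.length)).toList.map
    fun e => QF.type u.get (Fin.append e d)
  let Φ : Prenex A := .exIter a (.allIter b (.qf ψ))
  have hΦc : Φ.Closed := by
    simp only [Φ, Prenex.Closed, Prenex.closedUnder_exIter, Prenex.closedUnder_allIter]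
    refine QF.closedUnder_disj fun φ hφ => ?_
    obtain ⟨e, -, rfl⟩ := List.mem_map.1 hφ
    simpa [Nat.add_comm] using QF.closedUnder_type u.get (Fin.append e d)
  have hΦu : SatFin u Φ := fun val => by
    refine (sat_exIter _ a _ _).2 ⟨d, (sat_allIter _ b _ _).2 fun e => ?_⟩
    refine (QF.sat_disj _ _ _).2 ⟨_, List.mem_map.2 ⟨e, by simp, rfl⟩, ?_⟩
    rw [QF.sat_type_iff]
    simp only [prependVal_prependVal]
    exact ⟨fun _ => rfl, fun _ _ => Iff.rfl⟩
  have hΦv := h Φ hΦc (Prenex.isSigma_two_exIter_allIter a b ψ)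
    (by simp [Φ, Prenex.rank_exIter, Prenex.rank_allIter, Prenex.rank]; omega) hΦu
    (fun _ => ⟨0, List.length_pos_iff.2 hv⟩)
  obtain ⟨f, hf⟩ := (sat_exIter _ a _ _).1 hΦv
  refine ⟨f, fun e' => ?_⟩
  obtain ⟨φ, hφ, hsat⟩ := (QF.sat_disj _ _ _).1 ((sat_allIter _ b _ _).1 hf e')
  obtain ⟨e, -, rfl⟩ := List.mem_map.1 hφ
  refine ⟨e, ?_⟩
  simpa only [QF.sat_type_iff, prependVal_prependVal] using hsat

section Words

lemma catInf_coe_fin (u : List A) (w : ℕ → A) (i : Fin u.length) : catInf u w i = u.get i := by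
  simp [catInf]

lemma catInf_length_add (u : List A) (w : ℕ → A) (n : ℕ) : catInf u w (u.length + n) = w n := by
  simp [catInf]

lemma catInf_nil (w : ℕ → A) : catInf [] w = w := by
  funext n
  simp [catInf]

lemma catInf_append (u v : List A) (w : ℕ → A) : catInf (u ++ v) w = catInf u (catInf v w) := by
  funext n
  simp only [catInf, List.get_eq_getElem, List.length_append]
  split_ifs <;> first | omega | simp [List.getElem_append, *, Nat.sub_sub]

lemma wpow_mul_add (u : List A) (hu : u ≠ []) (q : ℕ) (r : Fin u.length) :
    wpow u hu (q * u.length + r) = u.get r := by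
  simp [wpow, Nat.mod_eq_of_lt r.isLt]

lemma fpow_succ (u : List A) (ℓ : ℕ) : fpow u (ℓ + 1) = u ++ fpow u ℓ := by
  simp [fpow, List.replicate_succ]

lemma length_fpow (u : List A) (ℓ : ℕ) : (fpow u ℓ).length = ℓ * u.length := by
  simp [fpow]

lemma fpow_ne_nil {u : List A} (hu : u ≠ []) {ℓ : ℕ} (hℓ : ℓ ≠ 0) : fpow u ℓ ≠ [] := by
  simp [← List.length_pos_iff, length_fpow, Nat.pos_of_ne_zero hℓ, List.length_pos_iff.2 hu]

lemma getElem_fpow {u : List A} (hu : 0 < u.length) (ℓ n : ℕ) (h : n < (fpow u ℓ).length) :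
    (fpow u ℓ)[n] = u[n % u.length]'(Nat.mod_lt _ hu) := by
  induction ℓ generalizing n with
  | zero => simp [length_fpow] at h
  | succ ℓ ih =>
      simp only [fpow_succ, List.getElem_append]
      split_ifs with hn
      · simp [Nat.mod_eq_of_lt hn]
      · simp [ih, ← Nat.mod_eq_sub_mod (Nat.le_of_not_lt hn)]

end Words

section Concatenation

variable {u u' : List A} {w w' : ℕ → A}

lemma SameType.catInf {ι : Type} {p q p₂ q₂ : ι → ℕ} {p₁ : ι → Fin u.length}
    {q₁ : ι → Fin u'.length} (h₁ : SameType u.get u'.get p₁ q₁) (h₂ : SameType w w' p₂ q₂)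
    (hsplit : ∀ i, (p i = p₁ i ∧ q i = q₁ i) ∨ (p i = u.length + p₂ i ∧ q i = u'.length + q₂ i)) :
    SameType (catInf u w) (catInf u' w') p q := by
  refine ⟨fun i => ?_, fun i j => ?_⟩
  · rcases hsplit i with ⟨hp, hq⟩ | ⟨hp, hq⟩
    · rw [hp, hq, catInf_coe_fin, catInf_coe_fin, h₁.1 i]
    · rw [hp, hq, catInf_length_add, catInf_length_add, h₂.1 i]
  · have := (p₁ i).isLt; have := (p₁ j).isLt; have := (q₁ i).isLt; have := (q₁ j).isLt
    have h₁ij := h₁.2 i j; have h₂ij := h₂.2 i j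
    simp only [Fin.lt_def] at h₁ij
    rcases hsplit i with ⟨hp, hq⟩ | ⟨hp, hq⟩ <;> rcases hsplit j with ⟨hp', hq'⟩ | ⟨hp', hq'⟩ <;>
      rw [hp, hq, hp', hq'] <;> omega

def splitPos (hu : u ≠ []) (n : ℕ) : Fin u.length × ℕ :=
  (if h : n < u.length then ⟨n, h⟩ else ⟨0, List.length_pos_iff.2 hu⟩, n - u.length)

lemma Sigma2Game.catInf {a b : ℕ} (hu : u ≠ []) (hu' : u' ≠ [])
    (h₁ : Sigma2Game u.get u'.get a b) (h₂ : Sigma2Game w w' a b) :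
    Sigma2Game (catInf u w) (catInf u' w') a b := by
  intro d
  obtain ⟨f₁, hf₁⟩ := h₁ fun i => (splitPos hu (d i)).1
  obtain ⟨f₂, hf₂⟩ := h₂ fun i => (splitPos hu (d i)).2
  refine ⟨fun i => if d i < u.length then f₁ i else u'.length + f₂ i, fun e' => ?_⟩
  obtain ⟨e₁, he₁⟩ := hf₁ fun j => (splitPos hu' (e' j)).1
  obtain ⟨e₂, he₂⟩ := hf₂ fun j => (splitPos hu' (e' j)).2
  refine ⟨fun j => if e' j < u'.length then e₁ j else u.length + e₂ j, he₁.catInf he₂ ?_⟩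
  refine Fin.addCases (fun j => ?_) (fun i => ?_)
  · by_cases h : e' j < u'.length
    · simp [splitPos, h]
    · simp [splitPos, h]; omega
  · by_cases h : d i < u.length
    · simp [splitPos, h]
    · simp [splitPos, h]; omega

end Concatenation

lemma sigma2Game_catInf_fpow {y y' : List A} {a b : ℕ} (hy : y ≠ []) (hy' : y' ≠ [])
    (h : Sigma2Game y.get y'.get a b) (t : ℕ → A) (ℓ : ℕ) :
    Sigma2Game (catInf (fpow y ℓ) t) (catInf (fpow y' ℓ) t) a b := by
  induction ℓ with
  | zero => simpa [fpow, catInf_nil] using Sigma2Game.refl t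
  | succ ℓ ih =>
      rw [fpow_succ, fpow_succ, catInf_append, catInf_append]
      exact h.catInf hy hy' ih

lemma mul_add_lt_mul_add_iff {m q q' r r' : ℕ} (hr : r < m) (hr' : r' < m) :
    q * m + r < q' * m + r' ↔ q < q' ∨ q = q' ∧ r < r' := by
  constructor
  · intro h
    rcases lt_trichotomy q q' with hq | rfl | hq
    · exact Or.inl hq
    · exact Or.inr ⟨rfl, by omega⟩
    · nlinarith
  · rintro (hq | ⟨rfl, h⟩)
    · nlinarith
    · omega

lemma exists_strictMono_forall_mem {T : Finset ℕ} {ℓ : ℕ} (hT : T.card ≤ ℓ) :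
    ∃ ρ : ℕ → ℕ, StrictMono ρ ∧ ∀ q ∈ T, ∃ Q < ℓ, ρ Q = q := by
  classical
  let P : ℕ → Prop := fun j => j ∈ T ∨ T.sup id < j
  have hP : {j | P j}.Infinite := (Set.Ioi_infinite (T.sup id)).mono fun j hj => Or.inr hj
  refine ⟨Nat.nth P, Nat.nth_strictMono hP,
    fun q hq => ⟨Nat.count P q, ?_, Nat.nth_count (Or.inl hq)⟩⟩
  have hsub : (Finset.range q).filter P ⊂ T := by
    refine Finset.ssubset_iff_of_subset (fun j hj => ?_) |>.2 ⟨q, hq, by simp⟩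
    obtain ⟨hjq, hj | hj⟩ := by simpa using hj
    · exact hj
    · exact absurd (Finset.le_sup (f := id) hq) (by simp only [id]; omega)
  rw [Nat.count_eq_card_filter_range]
  exact (Finset.card_lt_card hsub).trans_le hT

lemma sigma2Game_wpow {y : List A} (hy : y ≠ []) {t : ℕ → A} (ht : ∀ n, t n ∈ y)
    {a b ℓ : ℕ} (hℓ : a ≤ ℓ) : Sigma2Game (wpow y hy) (catInf (fpow y ℓ) t) a b := by
  classical
  set m := y.length
  have hm : 0 < m := List.length_pos_iff.2 hy
  choose pk hpk using fun n => List.mem_iff_get.1 (ht n)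
  refine Sigma2Game.of_embeddings fun d => ?_
  obtain ⟨ρ, hρ, hρT⟩ := exists_strictMono_forall_mem (T := Finset.univ.image fun i => d i / m)
    (Finset.card_image_le.trans (by simpa using hℓ))
  -- Position `n` of `y^ℓ t` is letter `off n` of copy `copy n` of `y`, each letter of `t` getting
  -- a copy of its own; copy `Q` is sent to copy `ρ Q` of `y^∞`.
  let copy : ℕ → ℕ := fun n => if n < ℓ * m then n / m else ℓ + (n - ℓ * m)
  let off : ℕ → Fin m := fun n => if n < ℓ * m then ⟨n % m, Nat.mod_lt _ hm⟩ else pk (n - ℓ * m)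
  have hlex : ∀ n n', n < n' → copy n < copy n' ∨ copy n = copy n' ∧ off n < off n' := by
    intro n n' h
    by_cases h' : n' < ℓ * m
    · have := (mul_add_lt_mul_add_iff (Nat.mod_lt n hm) (Nat.mod_lt n' hm)).1
        (by rwa [Nat.div_add_mod', Nat.div_add_mod'])
      simpa [copy, off, h', h.trans h', Fin.lt_def] using this
    · left
      by_cases hn : n < ℓ * m
      · have := Nat.div_lt_of_lt_mul (show n < m * ℓ by rwa [Nat.mul_comm])
        simp only [copy, h', hn, if_true, if_false]; omega
      · simp only [copy, h', hn, if_false]; omega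
  refine ⟨fun n => ρ (copy n) * m + off n, fun n n' h => ?_, fun n => ?_, fun i => ?_⟩
  · exact (mul_add_lt_mul_add_iff (off n).isLt (off n').isLt).2
      ((hlex n n' h).imp (fun h => hρ h) fun h => ⟨congrArg ρ h.1, h.2⟩)
  · rw [wpow_mul_add]
    by_cases hn : n < ℓ * m
    · simp [off, catInf, hn, length_fpow, getElem_fpow hm, m]
    · simp [off, catInf, hn, length_fpow, ← hpk, m]
  · obtain ⟨Q, hQ, hρQ⟩ := hρT (d i / m) (Finset.mem_image_of_mem _ (Finset.mem_univ i))
    have hlt : Q * m + d i % m < ℓ * m :=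
      (mul_add_lt_mul_add_iff (Nat.mod_lt _ hm) hm).2 (Or.inl hQ) |>.trans_eq (by simp)
    have hdiv : (Q * m + d i % m) / m = Q := by
      rw [Nat.add_comm, Nat.add_mul_div_right _ _ hm, Nat.div_eq_of_lt (Nat.mod_lt _ hm), zero_add]
    refine ⟨Q * m + d i % m, ?_⟩
    simp [copy, off, hlt, hdiv, hρQ, Nat.div_add_mod']

lemma leInf_catInf_wpow_catInf_fpow {x₁ x₂ y₁ y₂ : List A} (hx₁ : x₁ ≠ []) (hx₂ : x₂ ≠ [])
    (hy₁ : y₁ ≠ []) (hy₂ : y₂ ≠ []) {k ℓ : ℕ} (hx : leFin 2 k x₁ x₂) (hy : leFin 2 k y₁ y₂)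
    {t : ℕ → A} (ht : ∀ n, t n ∈ y₁) (hℓ : k ≤ ℓ) :
    leInf 2 k (catInf x₁ (wpow y₁ hy₁)) (catInf x₂ (catInf (fpow y₂ ℓ) t)) := by
  have hgame : ∀ a b, a + b ≤ k →
      Sigma2Game (catInf x₁ (wpow y₁ hy₁)) (catInf x₂ (catInf (fpow y₂ ℓ) t)) a b :=
    fun a b hab =>
      ((Sigma2Game.refl x₁.get).catInf hx₁ hx₁ (sigma2Game_wpow hy₁ ht (by omega))).trans
        ((sigma2Game_of_leFin hx hab hx₂).catInf hx₁ hx₂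
          (sigma2Game_catInf_fpow hy₁ hy₂ (sigma2Game_of_leFin hy hab hy₂) t ℓ))
  exact fun φ hc hs hk hφ => sat_of_sigma2Game hgame hc hs hk hφ

section OmegaSemigroup

variable {Sp Si : Type} (M : OmegaSG Sp Si)

lemma mpow_add_add_one (s : Sp) (x y : ℕ) :
    mpow M.mul s (x + y + 1) = M.mul (mpow M.mul s x) (mpow M.mul s y) := by
  induction y with
  | zero => rfl
  | succ y ih =>
      show M.mul (mpow M.mul s (x + y + 1)) s = _
      rw [ih, M.mul_assoc]
      rfl

lemma mpow_mul_add_of_idempotent {s : Sp} {e : ℕ}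
    (he : M.mul (mpow M.mul s e) (mpow M.mul s e) = mpow M.mul s e) (n : ℕ) :
    mpow M.mul s (n * (e + 1) + e) = mpow M.mul s e := by
  induction n with
  | zero => simp
  | succ n ih => rw [show (n + 1) * (e + 1) + e = n * (e + 1) + e + e + 1 by ring,
      mpow_add_add_one, ih, he]

lemma map_fpow_succ {αp : List A → Sp}
    (hp : ∀ u v : List A, u ≠ [] → v ≠ [] → αp (u ++ v) = M.mul (αp u) (αp v))
    {u : List A} (hu : u ≠ []) (n : ℕ) : αp (fpow u (n + 1)) = mpow M.mul (αp u) n := by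
  induction n with
  | zero => simp [fpow, mpow]
  | succ n ih =>
      rw [fpow_succ, hp _ _ hu (fpow_ne_nil hu n.succ_ne_zero), ih,
        show n + 1 = 0 + n + 1 by omega, mpow_add_add_one]
      rfl

end OmegaSemigroup

theorem sigma2_saturation_correct_general (A Sp Si : Type) (M : OmegaSG Sp Si)
    (αp : List A → Sp) (αi : (ℕ → A) → Si)
    (hp : ∀ u v : List A, u ≠ [] → v ≠ [] → αp (u ++ v) = M.mul (αp u) (αp v))
    (hmix : ∀ (u : List A), u ≠ [] → ∀ w : ℕ → A, αi (catInf u w) = M.act (αp u) (αi w))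
    (hpow : ∀ (u : List A) (hu : u ≠ []), αi (wpow u hu) = M.ipow (αp u))
    (hacF : ∀ u v : List A, u ≠ [] → v ≠ [] → αp u = αp v → alphFin u = alphFin v)
    (e : ℕ) (he : ∀ s : Sp, M.mul (mpow M.mul s e) (mpow M.mul s e) = mpow M.mul s e)
    (r₁ r₂ s₁ s₂ : Sp) (t₂ : Si)
    (hr : (r₁, r₂) ∈ C22Fin αp) (hs : (s₁, s₂) ∈ C22Fin αp)
    (ht : ∃ w : ℕ → A, αi w = t₂)
    (halph : alphS αp s₁ = alphSi αi t₂) :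
    (M.act r₁ (M.ipow s₁), M.act (M.mul r₂ (mpow M.mul s₂ e)) t₂) ∈ C22Inf αi := by
  intro k hk
  obtain ⟨x₁, x₂, hx₁, hx₂, rfl, rfl, hx⟩ := hr k hk
  obtain ⟨y₁, y₂, hy₁, hy₂, rfl, rfl, hy⟩ := hs k hk
  obtain ⟨t, rfl⟩ := ht
  have hty : ∀ n, t n ∈ y₁ := fun n => by
    obtain ⟨u, hu, hαu, htu⟩ : t n ∈ alphS αp (αp y₁) := halph ▸ ⟨t, rfl, n, rfl⟩
    show t n ∈ alphFin y₁
    rw [← hacF u y₁ hu hy₁ hαu]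
    exact htu
  -- `ℓ ≥ k` copies of `y₂`, and `ℓ ≡ 0 (mod e + 1)` so that `y₂^ℓ` evaluates to `s₂^ω`
  let ℓ := k * (e + 1) + e + 1
  refine ⟨catInf x₁ (wpow y₁ hy₁), catInf x₂ (catInf (fpow y₂ ℓ) t), ?_, ?_,
    leInf_catInf_wpow_catInf_fpow hx₁ hx₂ hy₁ hy₂ hx hy hty (by simp only [ℓ]; nlinarith)⟩
  · rw [hmix _ hx₁, hpow]
  · rw [hmix _ hx₂, hmix _ (fpow_ne_nil hy₂ (Nat.succ_ne_zero _)), map_fpow_succ M hp hy₂,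
      mpow_mul_add_of_idempotent M (he _), M.act_assoc]

/-- **Correctness of the `Σ₂`-saturation.** For an alphabet-compatible
morphism `α` into a finite ω-semigroup: if `(r₁,r₂), (s₁,s₂) ∈ C_{2,2}[α₊]`,
`t₂ ∈ α(A^∞)` and `alph s₁ = alph t₂`, then
`(r₁ s₁^∞, r₂ s₂^ω t₂) ∈ C_{2,2}[α_∞]`. -/
theorem sigma2_saturation_correct (A Sp Si : Type) (M : OmegaSG Sp Si)
    (hSp : Finite Sp) (hSi : Finite Si)
    (αp : List A → Sp) (αi : (ℕ → A) → Si)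
    (hp : ∀ u v : List A, u ≠ [] → v ≠ [] → αp (u ++ v) = M.mul (αp u) (αp v))
    (hmix : ∀ (u : List A), u ≠ [] → ∀ w : ℕ → A, αi (catInf u w) = M.act (αp u) (αi w))
    (hpow : ∀ (u : List A) (hu : u ≠ []), αi (wpow u hu) = M.ipow (αp u))
    (hacF : ∀ u v : List A, u ≠ [] → v ≠ [] → αp u = αp v → alphFin u = alphFin v)
    (hacI : ∀ w w' : ℕ → A, αi w = αi w' → alphInf w = alphInf w')
    (e : ℕ) (he : ∀ s : Sp, M.mul (mpow M.mul s e) (mpow M.mul s e) = mpow M.mul s e)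
    (r₁ r₂ s₁ s₂ : Sp) (t₂ : Si)
    (hr : (r₁, r₂) ∈ C22Fin αp) (hs : (s₁, s₂) ∈ C22Fin αp)
    (ht : ∃ w : ℕ → A, αi w = t₂)
    (halph : alphS αp s₁ = alphSi αi t₂) :
    (M.act r₁ (M.ipow s₁), M.act (M.mul r₂ (mpow M.mul s₂ e)) t₂) ∈ C22Inf αi :=
  sigma2_saturation_correct_general A Sp Si M αp αi hp hmix hpow hacF e he r₁ r₂ s₁ s₂ t₂ hr hs ht
    halph

end QAH
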